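/- Let X_G be a branch bag of a tree decomposition with children whose terminal subgraphs are H_1, ..., H_c (c a constant), and suppose H_i' ∼_P H_i with X_{H_i'} = X_{H_i} for each i. Then (H_1 ⊕_T X_G) ⊕_▷ ⋯ ⊕_▷ (H_c ⊕_T X_G) ∼_P (H_1' ⊕_T X_G) ⊕_▷ ⋯ ⊕_▷ (H_c' ⊕_T X_G). -/

import Mathlib

/-- A plain graph: vertex set and edge set (over an ambient vertex type). -/
structure PGraph (V : Type) where
  verts : Set V
  edges : Set (Sym2 V)

/-- A terminal graph: graph together with an ordered list of terminals. -/
structure TermGraph (V : Type) where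
  verts : Set V
  edges : Set (Sym2 V)
  terms : List V

variable {V : Type} [DecidableEq V]

/-- The map renaming the `i`-th terminal of `K` to the `i`-th terminal of `G`
(used to identify corresponding terminals when gluing). -/
def glueMap (G K : TermGraph V) (x : V) : V :=
  if x ∈ K.terms then G.terms.getD (K.terms.idxOf x) x else x

/-- Gluing `G ⊕ K`: disjoint union with corresponding terminals identified
(parallel edges dropped, result is a plain graph). -/
def oplus (G K : TermGraph V) : PGraph V :=
  ⟨G.verts ∪ (glueMap G K) '' K.verts, G.edges ∪ (Sym2.map (glueMap G K)) '' K.edges⟩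

/-- Gluing, keeping the terminal list of `G` (a terminal graph version of `⊕`). -/
def oplusTG (G K : TermGraph V) : TermGraph V :=
  ⟨G.verts ∪ (glueMap G K) '' K.verts, G.edges ∪ (Sym2.map (glueMap G K)) '' K.edges, G.terms⟩

/-- `G ⊕_T X`: add the vertices of `X` and make `X` the new terminal list. -/
def oplusT (G : TermGraph V) (X : List V) : TermGraph V :=
  ⟨G.verts ∪ {x | x ∈ X}, G.edges, X⟩

/-- `G ⊕_▷ H`: union of vertices and edges, keeping the terminals of `G`. -/
def oplusRhd (G H : TermGraph V) : TermGraph V :=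
  ⟨G.verts ∪ H.verts, G.edges ∪ H.edges, G.terms⟩

/-- The equivalence `G ∼_P H`: same boundary size, and for every terminal
graph `K` of matching boundary size, `P (G ⊕ K) ↔ P (H ⊕ K)`. -/
def EquivP (P : PGraph V → Prop) (G H : TermGraph V) : Prop :=
  G.terms.length = H.terms.length ∧
    ∀ K : TermGraph V, K.terms.length = G.terms.length →
      (P (oplus G K) ↔ P (oplus H K))

/-- Iterated gluing `(H_1 ⊕_T X) ⊕_▷ ⋯ ⊕_▷ (H_c ⊕_T X)` of a list of terminal
graphs below a branch bag `X`. -/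
def bigGlue (X : List V) (l : List (TermGraph V)) : TermGraph V :=
  l.foldl (fun acc H => oplusRhd acc (oplusT H X)) ⟨{x | x ∈ X}, ∅, X⟩

/-! Gluing a context onto a graph with the same terminal list is plain union, and the glue map
of `A ⊕_▷ B` only sees the terminals of `A`. So gluing `K` onto `A ⊕_▷ (H ⊕_T X)` can be read
as gluing a suitable context with the terminals of `A` onto `A`, or one with the terminals of
`H` onto `H`; hence `A` and each `H` may be replaced by a `∼_P`-equivalent graph with the same
terminals, one at a time along the fold. -/

lemma glueMap_eq_id_of_terms_eq {G K : TermGraph V} (h : K.terms = G.terms) :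
    glueMap G K = id := by
  funext x
  by_cases hx : x ∈ K.terms
  · rw [h] at hx
    simp [glueMap, h, hx]
  · simp [glueMap, hx]

lemma glueMap_congr_left {G G' : TermGraph V} (h : G.terms = G'.terms) (K : TermGraph V) :
    glueMap G K = glueMap G' K := by
  funext x
  simp only [glueMap, h]

lemma oplus_eq_of_terms_eq (G K : TermGraph V) (h : K.terms = G.terms) :
    oplus G K = ⟨G.verts ∪ K.verts, G.edges ∪ K.edges⟩ := by
  simp [oplus, glueMap_eq_id_of_terms_eq h]

lemma oplus_oplusRhd (A B K : TermGraph V) :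
    oplus (oplusRhd A B) K =
      ⟨A.verts ∪ (B.verts ∪ glueMap A K '' K.verts),
        A.edges ∪ (B.edges ∪ Sym2.map (glueMap A K) '' K.edges)⟩ := by
  simp only [oplus, oplusRhd, Set.union_assoc]
  rfl

namespace EquivP

variable {P : PGraph V → Prop}

lemma symm {G H : TermGraph V} (h : EquivP P G H) : EquivP P H G :=
  ⟨h.1.symm, fun K hK => (h.2 K (hK.trans h.1.symm)).symm⟩

lemma trans {G₁ G₂ G₃ : TermGraph V} (h₁ : EquivP P G₁ G₂) (h₂ : EquivP P G₂ G₃) :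
    EquivP P G₁ G₃ :=
  ⟨h₁.1.trans h₂.1, fun K hK => (h₁.2 K hK).trans (h₂.2 K (hK.trans h₁.1))⟩

lemma union_iff {G G' : TermGraph V} (h : EquivP P G G') (ht : G.terms = G'.terms)
    (W : Set V) (E : Set (Sym2 V)) :
    P ⟨G.verts ∪ W, G.edges ∪ E⟩ ↔ P ⟨G'.verts ∪ W, G'.edges ∪ E⟩ := by
  have := h.2 ⟨W, E, G.terms⟩ rfl
  rwa [oplus_eq_of_terms_eq G ⟨W, E, G.terms⟩ rfl, oplus_eq_of_terms_eq G' ⟨W, E, G.terms⟩ ht]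
    at this

lemma oplusRhd_left {A A' : TermGraph V} (h : EquivP P A A') (ht : A.terms = A'.terms)
    (B : TermGraph V) : EquivP P (oplusRhd A B) (oplusRhd A' B) := by
  refine ⟨h.1, fun K _ => ?_⟩
  rw [oplus_oplusRhd, oplus_oplusRhd, glueMap_congr_left ht]
  exact h.union_iff ht _ _

lemma oplusRhd_oplusT_right {H H' : TermGraph V} (h : EquivP P H H') (ht : H.terms = H'.terms)
    (A : TermGraph V) (X : List V) :
    EquivP P (oplusRhd A (oplusT H X)) (oplusRhd A (oplusT H' X)) := by
  refine ⟨rfl, fun K _ => ?_⟩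
  simp only [oplus_oplusRhd, oplusT, Set.union_assoc, Set.union_left_comm A.verts,
    Set.union_left_comm A.edges]
  exact h.union_iff ht _ _

end EquivP

lemma bigGlue_equivP_of_forall₂ (P : PGraph V → Prop) (X : List V) {l l' : List (TermGraph V)}
    (h : List.Forall₂ (fun H H' => EquivP P H H' ∧ H.terms = H'.terms) l l') :
    EquivP P (bigGlue X l) (bigGlue X l') := by
  refine (List.rel_foldl (P := fun G G' => EquivP P G G' ∧ G.terms = G'.terms)
    ?_ ⟨⟨rfl, fun _ _ => Iff.rfl⟩, rfl⟩ h).1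
  rintro A A' ⟨hA, hAt⟩ H H' ⟨hH, hHt⟩
  exact ⟨(hA.oplusRhd_left hAt _).trans (hH.oplusRhd_oplusT_right hHt A' X), hAt⟩

/-- if `H_i' ∼_P H_i` with `X_{H_i'} = X_{H_i}` for each `i`, then
`(H_1 ⊕_T X_G) ⊕_▷ ⋯ ⊕_▷ (H_c ⊕_T X_G) ∼_P (H_1' ⊕_T X_G) ⊕_▷ ⋯ ⊕_▷ (H_c' ⊕_T X_G)`. -/
theorem bigGlue_equivP (P : PGraph V → Prop) (c : ℕ) (XG : List V)
    (Hs Hs' : Fin c → TermGraph V)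
    (hEq : ∀ i, EquivP P (Hs' i) (Hs i))
    (hTm : ∀ i, (Hs' i).terms = (Hs i).terms) :
    EquivP P (bigGlue XG (List.ofFn Hs)) (bigGlue XG (List.ofFn Hs')) := by
  refine bigGlue_equivP_of_forall₂ P XG (List.forall₂_iff_get.2 ⟨by simp, fun i hi _ => ?_⟩)
  simpa using And.intro (hEq ⟨i, by simpa using hi⟩).symm (hTm _).symm
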